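/- Assume that {f_i}_{i∈𝓘_N} and {g_i}_{i∈𝓘_N} are both D-systems on [0,1]. Then there exists a unique continuous strictly increasing function φ:[0,1]→[0,1] satisfying g_i∘φ = φ∘f_i for every i ∈ 𝓘_N. -/

import Mathlib

open Set Filter Topology

/-- A compatible system of `N` maps on `[0,1]`: each map is continuous and strictly
increasing on `[0,1]`, maps `[0,1]` into `[0,1]`, `h 0 0 = 0`, `h (i-1) 1 = h i 0`
for `1 ≤ i ≤ N-1`, and `h (N-1) 1 = 1`. -/
def CompatibleSystem (N : ℕ) (h : ℕ → ℝ → ℝ) : Prop :=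
  (∀ i < N, Set.MapsTo (h i) (Set.Icc (0:ℝ) 1) (Set.Icc (0:ℝ) 1)) ∧
  (∀ i < N, ContinuousOn (h i) (Set.Icc (0:ℝ) 1)) ∧
  (∀ i < N, StrictMonoOn (h i) (Set.Icc (0:ℝ) 1)) ∧
  h 0 0 = 0 ∧
  (∀ i, 1 ≤ i → i < N → h (i - 1) 1 = h i 0) ∧
  h (N - 1) 1 = 1

/-- `h_{σ₁} ∘ ⋯ ∘ h_{σₙ} (x)` for a finite word `σ`. -/
def wordComp (h : ℕ → ℝ → ℝ) (σ : List ℕ) (x : ℝ) : ℝ :=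
  σ.foldr (fun i y => h i y) x

/-- The set `𝓓_h = {h_{i₁} ∘ ⋯ ∘ h_{iₙ}(j) : n ≥ 1, i₁,…,iₙ < N, j ∈ {0,1}}`. -/
def DSet (N : ℕ) (h : ℕ → ℝ → ℝ) : Set ℝ :=
  {x | ∃ σ : List ℕ, σ ≠ [] ∧ (∀ i ∈ σ, i < N) ∧ ∃ j : ℝ, (j = 0 ∨ j = 1) ∧ x = wordComp h σ j}

/-- A D-system: a compatible system whose set `𝓓_h` is dense in `[0,1]`. -/
def IsDSystem (N : ℕ) (h : ℕ → ℝ → ℝ) : Prop :=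
  CompatibleSystem N h ∧ Set.Icc (0:ℝ) 1 ⊆ closure (DSet N h)

/-- `h_{i 0} ∘ h_{i 1} ∘ ⋯ ∘ h_{i (n-1)} (x)` for an infinite sequence `i`. -/
def seqComp (h : ℕ → ℝ → ℝ) (i : ℕ → ℕ) (n : ℕ) (x : ℝ) : ℝ :=
  wordComp h (List.ofFn fun k : Fin n => i k) x


section Lemmas
variable {N : ℕ} {h : ℕ → ℝ → ℝ}

lemma cs_mem (H : CompatibleSystem N h) {i : ℕ} (hi : i < N) {x : ℝ}
    (hx : x ∈ Icc (0:ℝ) 1) : h i x ∈ Icc (0:ℝ) 1 := H.1 i hi hx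

lemma cs_mono (H : CompatibleSystem N h) {i : ℕ} (hi : i < N) :
    StrictMonoOn (h i) (Icc (0:ℝ) 1) := H.2.2.1 i hi

lemma cs_link (H : CompatibleSystem N h) {i : ℕ} (hi : i + 1 < N) :
    h i 1 = h (i+1) 0 := by
  have := H.2.2.2.2.1 (i+1) (by omega) hi
  simpa using this

lemma mem01 : (0:ℝ) ∈ Icc (0:ℝ) 1 := by norm_num
lemma mem11 : (1:ℝ) ∈ Icc (0:ℝ) 1 := by norm_num

lemma cs_lt (H : CompatibleSystem N h) {i : ℕ} (hi : i < N) : h i 0 < h i 1 :=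
  cs_mono H hi mem01 mem11 one_pos

lemma cs_chain (H : CompatibleSystem N h) {i i' : ℕ} (hii : i < i') (hi' : i' < N) :
    h i 1 ≤ h i' 0 := by
  induction i' with
  | zero => omega
  | succ m ih =>
    rcases Nat.lt_or_ge i m with hm | hm
    · exact le_trans (ih hm (by omega)) (le_trans (cs_lt H (by omega)).le (cs_link H hi').le)
    · have : i = m := by omega
      subst this
      exact (cs_link H hi').le

lemma cs_chain_lt (H : CompatibleSystem N h) {i i' : ℕ} (hii : i + 1 < i') (hi' : i' < N) :
    h i 1 < h i' 0 := by
  calc h i 1 = h (i+1) 0 := cs_link H (by omega)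
    _ < h (i+1) 1 := cs_lt H (by omega)
    _ ≤ h i' 0 := cs_chain H hii hi'

lemma cs_pos (H : CompatibleSystem N h) {i : ℕ} (h1 : 1 ≤ i) (hi : i < N) :
    0 < h i 0 := by
  have h0 : h 0 0 < h 0 1 := cs_lt H (by omega)
  have := cs_chain H (show 0 < i by omega) hi
  have := H.2.2.2.1
  linarith

lemma cs_lt_one (H : CompatibleSystem N h) {i : ℕ} (hi : i < N - 1) :
    h i 1 < 1 := by
  have hN : N - 1 < N := by omega
  have h1 : h (N-1) 0 < h (N-1) 1 := cs_lt H hN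
  have h2 : h i 1 ≤ h (N-1) 0 := cs_chain H hi hN
  have h3 := H.2.2.2.2.2
  linarith

lemma word_nil (x : ℝ) : wordComp h [] x = x := rfl
lemma word_cons (i : ℕ) (σ : List ℕ) (x : ℝ) :
    wordComp h (i :: σ) x = h i (wordComp h σ x) := rfl

lemma word_mem (H : CompatibleSystem N h) {σ : List ℕ} (hσ : ∀ i ∈ σ, i < N)
    {x : ℝ} (hx : x ∈ Icc (0:ℝ) 1) : wordComp h σ x ∈ Icc (0:ℝ) 1 := by
  induction σ with
  | nil => exact hx
  | cons i σ ih =>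
    exact cs_mem H (hσ i (by simp)) (ih fun j hj => hσ j (by simp [hj]))

lemma word_lt (H : CompatibleSystem N h) {σ : List ℕ} (hσ : ∀ i ∈ σ, i < N)
    {x y : ℝ} (hx : x ∈ Icc (0:ℝ) 1) (hy : y ∈ Icc (0:ℝ) 1) (hxy : x < y) :
    wordComp h σ x < wordComp h σ y := by
  induction σ with
  | nil => exact hxy
  | cons i σ ih =>
    have hi := hσ i (by simp)
    have hσ' : ∀ j ∈ σ, j < N := fun j hj => hσ j (by simp [hj])
    exact cs_mono H hi (word_mem H hσ' hx) (word_mem H hσ' hy) (ih hσ')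

lemma word_le (H : CompatibleSystem N h) {σ : List ℕ} (hσ : ∀ i ∈ σ, i < N)
    {x y : ℝ} (hx : x ∈ Icc (0:ℝ) 1) (hy : y ∈ Icc (0:ℝ) 1) (hxy : x ≤ y) :
    wordComp h σ x ≤ wordComp h σ y := by
  rcases eq_or_lt_of_le hxy with rfl | hlt
  · exact le_refl _
  · exact (word_lt H hσ hx hy hlt).le

lemma word_eq_zero (H : CompatibleSystem N h) {σ : List ℕ} (hσ : ∀ i ∈ σ, i < N)
    {x : ℝ} (hx : x ∈ Icc (0:ℝ) 1) :
    wordComp h σ x = 0 ↔ (∀ i ∈ σ, i = 0) ∧ x = 0 := by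
  induction σ with
  | nil => simp [word_nil]
  | cons i σ ih =>
    have hi := hσ i (by simp)
    have hσ' : ∀ j ∈ σ, j < N := fun j hj => hσ j (by simp [hj])
    have hw := word_mem H hσ' hx
    rw [word_cons]
    constructor
    · intro h0
      have hi0 : i = 0 := by
        by_contra hne
        have := cs_pos H (by omega) hi
        have := cs_mono H hi mem01 hw
        rcases eq_or_lt_of_le hw.1 with heq | hlt
        · rw [← heq] at h0; linarith
        · have := cs_mono H hi mem01 hw hlt; linarith
      subst hi0
      have hzero : h 0 0 = 0 := H.2.2.2.1
      have hw0 : wordComp h σ x = 0 := by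
        by_contra hne
        have hlt : 0 < wordComp h σ x := lt_of_le_of_ne hw.1 (Ne.symm hne)
        have := cs_mono H hi mem01 hw hlt
        rw [hzero] at this; linarith
      rcases (ih hσ').mp hw0 with ⟨ha, hb⟩
      exact ⟨by intro j hj; rcases List.mem_cons.mp hj with rfl | hm; rfl; exact ha j hm, hb⟩
    · rintro ⟨ha, rfl⟩
      have hi0 : i = 0 := ha i (by simp)
      subst hi0
      have : wordComp h σ 0 = 0 := (ih hσ').mpr ⟨fun j hj => ha j (by simp [hj]), rfl⟩
      rw [this]; exact H.2.2.2.1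

lemma word_eq_one (H : CompatibleSystem N h) (hN : 1 ≤ N) {σ : List ℕ} (hσ : ∀ i ∈ σ, i < N)
    {x : ℝ} (hx : x ∈ Icc (0:ℝ) 1) :
    wordComp h σ x = 1 ↔ (∀ i ∈ σ, i = N - 1) ∧ x = 1 := by
  induction σ with
  | nil => simp [word_nil]
  | cons i σ ih =>
    have hi := hσ i (by simp)
    have hσ' : ∀ j ∈ σ, j < N := fun j hj => hσ j (by simp [hj])
    have hw := word_mem H hσ' hx
    rw [word_cons]
    constructor
    · intro h1
      have hi1 : i = N - 1 := by
        by_contra hne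
        have hlt : i < N - 1 := by omega
        have h2 : h i (wordComp h σ x) ≤ h i 1 := by
          rcases eq_or_lt_of_le hw.2 with heq | hl
          · rw [heq]
          · exact (cs_mono H hi hw mem11 hl).le
        have := cs_lt_one H hlt
        linarith
      subst hi1
      have htop : h (N-1) 1 = 1 := H.2.2.2.2.2
      have hw1 : wordComp h σ x = 1 := by
        by_contra hne
        have hlt : wordComp h σ x < 1 := lt_of_le_of_ne hw.2 hne
        have := cs_mono H hi hw mem11 hlt
        rw [htop] at this; linarith
      rcases (ih hσ').mp hw1 with ⟨ha, hb⟩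
      exact ⟨by intro j hj; rcases List.mem_cons.mp hj with rfl | hm; rfl; exact ha j hm, hb⟩
    · rintro ⟨ha, rfl⟩
      have hi1 : i = N - 1 := ha i (by simp)
      subst hi1
      have : wordComp h σ 1 = 1 := (ih hσ').mpr ⟨fun j hj => ha j (by simp [hj]), rfl⟩
      rw [this]; exact H.2.2.2.2.2

end Lemmas

section Key
variable {N : ℕ} {f g : ℕ → ℝ → ℝ}

lemma endpoint_mem {j : ℝ} (hj : j = 0 ∨ j = 1) : j ∈ Icc (0:ℝ) 1 := by
  rcases hj with rfl | rfl <;> norm_num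

/-- The comparison of word values is system-independent. -/
lemma key_le (Hf : CompatibleSystem N f) (Hg : CompatibleSystem N g) (hN : 1 ≤ N) :
    ∀ σ τ : List ℕ, (∀ i ∈ σ, i < N) → (∀ i ∈ τ, i < N) →
    ∀ j k : ℝ, (j = 0 ∨ j = 1) → (k = 0 ∨ k = 1) →
    wordComp f σ j ≤ wordComp f τ k → wordComp g σ j ≤ wordComp g τ k := by
  intro σ
  induction σ with
  | nil =>
    intro τ _ hτ j k hj hk hle
    rcases hj with rfl | rfl
    · exact (word_mem Hg hτ (endpoint_mem hk)).1
    · rw [word_nil] at hle ⊢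
      have h1 : wordComp f τ k = 1 :=
        le_antisymm (word_mem Hf hτ (endpoint_mem hk)).2 hle
      rcases (word_eq_one Hf hN hτ (endpoint_mem hk)).mp h1 with ⟨ha, rfl⟩
      exact ((word_eq_one Hg hN hτ (endpoint_mem hk)).mpr ⟨ha, rfl⟩).ge
  | cons i σ ih =>
    intro τ hσ hτ j k hj hk hle
    have hi : i < N := hσ i (by simp)
    have hσ' : ∀ m ∈ σ, m < N := fun m hm => hσ m (by simp [hm])
    cases τ with
    | nil =>
      rcases hk with rfl | rfl
      · rw [word_nil] at hle ⊢
        have h0 : wordComp f (i :: σ) j = 0 :=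
          le_antisymm hle (word_mem Hf hσ (endpoint_mem hj)).1
        rcases (word_eq_zero Hf hσ (endpoint_mem hj)).mp h0 with ⟨ha, rfl⟩
        exact ((word_eq_zero Hg hσ (endpoint_mem hj)).mpr ⟨ha, rfl⟩).le
      · exact (word_mem Hg hσ (endpoint_mem hj)).2
    | cons i' τ' =>
      have hi' : i' < N := hτ i' (by simp)
      have hτ' : ∀ m ∈ τ', m < N := fun m hm => hτ m (by simp [hm])
      have hwfj := word_mem Hf hσ' (endpoint_mem hj)
      have hwfk := word_mem Hf hτ' (endpoint_mem hk)
      have hwgj := word_mem Hg hσ' (endpoint_mem hj)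
      have hwgk := word_mem Hg hτ' (endpoint_mem hk)
      rw [word_cons] at hle ⊢
      rw [word_cons] at hle ⊢
      rcases lt_trichotomy i i' with hlt | rfl | hgt
      · -- i < i' : always true on the g-side
        calc g i (wordComp g σ j) ≤ g i 1 := by
              rcases eq_or_lt_of_le hwgj.2 with he | hl
              · rw [he]
              · exact (cs_mono Hg hi hwgj mem11 hl).le
          _ ≤ g i' 0 := cs_chain Hg hlt hi'
          _ ≤ g i' (wordComp g τ' k) := by
              rcases eq_or_lt_of_le hwgk.1 with he | hl
              · rw [← he]
              · exact (cs_mono Hg hi' mem01 hwgk hl).le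
      · -- equal heads: strip and recurse
        have hle' : wordComp f σ j ≤ wordComp f τ' k :=
          ((cs_mono Hf hi).le_iff_le hwfj hwfk).mp hle
        have := ih τ' hσ' hτ' j k hj hk hle'
        rcases eq_or_lt_of_le this with he | hl
        · rw [he]
        · exact (cs_mono Hg hi hwgj hwgk hl).le
      · -- i > i' : forces equality pattern
        have e1 : f i' (wordComp f τ' k) ≤ f i' 1 := by
          rcases eq_or_lt_of_le hwfk.2 with he | hl
          · rw [he]
          · exact (cs_mono Hf hi' hwfk mem11 hl).le
        have e2 : f i' 1 ≤ f i 0 := cs_chain Hf hgt hi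
        have e3 : f i 0 ≤ f i (wordComp f σ j) := by
          rcases eq_or_lt_of_le hwfj.1 with he | hl
          · rw [← he]
          · exact (cs_mono Hf hi mem01 hwfj hl).le
        -- all must be equalities
        have q1 : f i' (wordComp f τ' k) = f i' 1 := by linarith
        have q2 : f i' 1 = f i 0 := by linarith
        have q3 : f i 0 = f i (wordComp f σ j) := by linarith
        have hwk1 : wordComp f τ' k = 1 :=
          (cs_mono Hf hi').injOn hwfk mem11 q1
        have hwj0 : wordComp f σ j = 0 :=
          ((cs_mono Hf hi).injOn mem01 hwfj q3).symm
        have hsucc : i = i' + 1 := by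
          by_contra hne
          have := cs_chain_lt Hf (show i' + 1 < i by omega) hi
          linarith
        rcases (word_eq_one Hf hN hτ' (endpoint_mem hk)).mp hwk1 with ⟨ha1, rfl⟩
        rcases (word_eq_zero Hf hσ' (endpoint_mem hj)).mp hwj0 with ⟨ha0, rfl⟩
        have g1 : wordComp g τ' 1 = 1 := (word_eq_one Hg hN hτ' mem11).mpr ⟨ha1, rfl⟩
        have g0 : wordComp g σ 0 = 0 := (word_eq_zero Hg hσ' mem01).mpr ⟨ha0, rfl⟩
        rw [g0, g1]
        rw [hsucc, ← cs_link Hg (by omega)]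

end Key

section Phi
variable {N : ℕ} {f g : ℕ → ℝ → ℝ}

/-- The set whose sup defines the conjugacy at `x`. -/
def PhiSet (N : ℕ) (f g : ℕ → ℝ → ℝ) (x : ℝ) : Set ℝ :=
  {y | ∃ σ : List ℕ, σ ≠ [] ∧ (∀ i ∈ σ, i < N) ∧
      ∃ j : ℝ, (j = 0 ∨ j = 1) ∧ y = wordComp g σ j ∧ wordComp f σ j ≤ x}

noncomputable def Phi (N : ℕ) (f g : ℕ → ℝ → ℝ) (x : ℝ) : ℝ :=
  sSup (PhiSet N f g x)

lemma phiSet_subset_Icc (Hg : CompatibleSystem N g) (x : ℝ) :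
    PhiSet N f g x ⊆ Icc (0:ℝ) 1 := by
  rintro y ⟨σ, -, hσ, j, hj, rfl, -⟩
  exact word_mem Hg hσ (endpoint_mem hj)

lemma phiSet_bdd (Hg : CompatibleSystem N g) (x : ℝ) : BddAbove (PhiSet N f g x) :=
  ⟨1, fun y hy => (phiSet_subset_Icc Hg x hy).2⟩

lemma phiSet_zero_mem (Hf : CompatibleSystem N f) (Hg : CompatibleSystem N g)
    (hN : 1 ≤ N) {x : ℝ} (hx : 0 ≤ x) :
    (0:ℝ) ∈ PhiSet N f g x := by
  refine ⟨[0], by simp, by simp; omega, 0, Or.inl rfl, ?_, ?_⟩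
  · rw [word_cons, word_nil]; exact Hg.2.2.2.1.symm
  · rw [word_cons, word_nil, Hf.2.2.2.1]; exact hx

lemma phiSet_mono (x y : ℝ) (hxy : x ≤ y) : PhiSet N f g x ⊆ PhiSet N f g y := by
  rintro z ⟨σ, h1, h2, j, h3, h4, h5⟩
  exact ⟨σ, h1, h2, j, h3, h4, le_trans h5 hxy⟩

end Phi

section Phi2
variable {N : ℕ} {f g : ℕ → ℝ → ℝ}

lemma key_lt (Hf : CompatibleSystem N f) (Hg : CompatibleSystem N g) (hN : 1 ≤ N)
    (σ τ : List ℕ) (hσ : ∀ i ∈ σ, i < N) (hτ : ∀ i ∈ τ, i < N)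
    (j k : ℝ) (hj : j = 0 ∨ j = 1) (hk : k = 0 ∨ k = 1)
    (hlt : wordComp f σ j < wordComp f τ k) : wordComp g σ j < wordComp g τ k := by
  rcases lt_or_ge (wordComp g σ j) (wordComp g τ k) with h1 | h1
  · exact h1
  · exact absurd (key_le Hg Hf hN τ σ hτ hσ k j hk hj h1) (not_le.mpr hlt)

lemma phiSet_nonempty (Hf : CompatibleSystem N f) (Hg : CompatibleSystem N g)
    (hN : 1 ≤ N) {x : ℝ} (hx : 0 ≤ x) : (PhiSet N f g x).Nonempty :=
  ⟨0, phiSet_zero_mem Hf Hg hN hx⟩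

lemma phi_mem (Hf : CompatibleSystem N f) (Hg : CompatibleSystem N g) (hN : 1 ≤ N)
    {x : ℝ} (hx : 0 ≤ x) : Phi N f g x ∈ Icc (0:ℝ) 1 :=
  ⟨le_csSup (phiSet_bdd Hg x) (phiSet_zero_mem Hf Hg hN hx),
   csSup_le (phiSet_nonempty Hf Hg hN hx) (fun y hy => (phiSet_subset_Icc Hg x hy).2)⟩

lemma phi_mono (Hf : CompatibleSystem N f) (Hg : CompatibleSystem N g) (hN : 1 ≤ N)
    {x y : ℝ} (hx : 0 ≤ x) (hxy : x ≤ y) : Phi N f g x ≤ Phi N f g y :=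
  csSup_le_csSup (phiSet_bdd Hg y) (phiSet_nonempty Hf Hg hN hx) (phiSet_mono x y hxy)

lemma phi_word (Hf : CompatibleSystem N f) (Hg : CompatibleSystem N g) (hN : 1 ≤ N)
    {τ : List ℕ} (hτne : τ ≠ []) (hτ : ∀ i ∈ τ, i < N) {k : ℝ} (hk : k = 0 ∨ k = 1) :
    Phi N f g (wordComp f τ k) = wordComp g τ k := by
  have hx : (0:ℝ) ≤ wordComp f τ k := (word_mem Hf hτ (endpoint_mem hk)).1
  apply le_antisymm
  · apply csSup_le (phiSet_nonempty Hf Hg hN hx)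
    rintro y ⟨σ, -, hσ, j, hj, rfl, hle⟩
    exact key_le Hf Hg hN σ τ hσ hτ j k hj hk hle
  · exact le_csSup (phiSet_bdd Hg _) ⟨τ, hτne, hτ, k, hk, rfl, le_refl _⟩

lemma phi_zero (Hf : CompatibleSystem N f) (Hg : CompatibleSystem N g) (hN : 1 ≤ N) :
    Phi N f g 0 = 0 := by
  apply le_antisymm
  · apply csSup_le (phiSet_nonempty Hf Hg hN le_rfl)
    rintro y ⟨σ, -, hσ, j, hj, rfl, hle⟩
    have h0 : wordComp f σ j = 0 :=
      le_antisymm hle (word_mem Hf hσ (endpoint_mem hj)).1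
    rcases (word_eq_zero Hf hσ (endpoint_mem hj)).mp h0 with ⟨ha, rfl⟩
    exact ((word_eq_zero Hg hσ mem01).mpr ⟨ha, rfl⟩).le
  · exact (phi_mem Hf Hg hN le_rfl).1

lemma dense_pick {h : ℕ → ℝ → ℝ} (hd : Icc (0:ℝ) 1 ⊆ closure (DSet N h))
    {x y : ℝ} (hx : 0 ≤ x) (hy : y ≤ 1) (hxy : x < y) :
    ∃ d ∈ DSet N h, x < d ∧ d < y := by
  have hz : (x+y)/2 ∈ Icc (0:ℝ) 1 := ⟨by linarith, by linarith⟩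
  have hz2 : (x+y)/2 ∈ Ioo x y := ⟨by linarith, by linarith⟩
  have := hd hz
  rcases mem_closure_iff.mp this (Ioo x y) isOpen_Ioo hz2 with ⟨d, hd1, hd2⟩
  exact ⟨d, hd2, hd1.1, hd1.2⟩

lemma phi_one (Hf : CompatibleSystem N f) (Hg : CompatibleSystem N g) (hN : 1 ≤ N)
    (hgd : Icc (0:ℝ) 1 ⊆ closure (DSet N g)) : Phi N f g 1 = 1 := by
  apply le_antisymm
  · exact (phi_mem Hf Hg hN zero_le_one).2
  · have hsub : DSet N g ⊆ Iic (Phi N f g 1) := by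
      rintro d ⟨σ, hne, hσ, j, hj, rfl⟩
      exact le_csSup (phiSet_bdd Hg 1)
        ⟨σ, hne, hσ, j, hj, rfl, (word_mem Hf hσ (endpoint_mem hj)).2⟩
    have : (1:ℝ) ∈ closure (DSet N g) := hgd mem11
    exact (isClosed_Iic.closure_subset_iff.mpr hsub) this

lemma phi_strictMono (Hf : CompatibleSystem N f) (Hg : CompatibleSystem N g) (hN : 1 ≤ N)
    (hfd : Icc (0:ℝ) 1 ⊆ closure (DSet N f)) :
    StrictMonoOn (Phi N f g) (Icc (0:ℝ) 1) := by
  intro x hx y hy hxy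
  obtain ⟨d, ⟨τ, hτne, hτ, k, hk, rfl⟩, hd1, hd2⟩ := dense_pick hfd hx.1 hy.2 hxy
  have hdmem := word_mem Hf hτ (endpoint_mem hk)
  obtain ⟨d', ⟨τ', hτne', hτ', k', hk', rfl⟩, hd1', hd2'⟩ := dense_pick hfd hx.1 hdmem.2 hd1
  calc Phi N f g x ≤ Phi N f g (wordComp f τ' k') := phi_mono Hf Hg hN hx.1 hd1'.le
    _ = wordComp g τ' k' := phi_word Hf Hg hN hτne' hτ' hk'
    _ < wordComp g τ k := key_lt Hf Hg hN τ' τ hτ' hτ k' k hk' hk hd2'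
    _ = Phi N f g (wordComp f τ k) := (phi_word Hf Hg hN hτne hτ hk).symm
    _ ≤ Phi N f g y := phi_mono Hf Hg hN hdmem.1 hd2.le

noncomputable def PhiExt (N : ℕ) (f g : ℕ → ℝ → ℝ) (x : ℝ) : ℝ :=
  if x < 0 then x else if 1 < x then x else Phi N f g x

lemma phiExt_eq (N : ℕ) (f g : ℕ → ℝ → ℝ) {x : ℝ} (hx : x ∈ Icc (0:ℝ) 1) :
    PhiExt N f g x = Phi N f g x := by
  unfold PhiExt
  rw [if_neg (not_lt.mpr hx.1), if_neg (not_lt.mpr hx.2)]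

lemma phiExt_mono (Hf : CompatibleSystem N f) (Hg : CompatibleSystem N g) (hN : 1 ≤ N) :
    Monotone (PhiExt N f g) := by
  intro x y hxy
  unfold PhiExt
  by_cases hx0 : x < 0
  · rw [if_pos hx0]
    by_cases hy0 : y < 0
    · rw [if_pos hy0]; exact hxy
    · rw [if_neg hy0]
      by_cases hy1 : 1 < y
      · rw [if_pos hy1]; exact hxy
      · rw [if_neg hy1]
        have := (phi_mem Hf Hg hN (not_lt.mp hy0)).1
        linarith
  · rw [if_neg hx0]
    have hy0 : ¬ y < 0 := by push_neg at hx0 ⊢; linarith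
    rw [if_neg hy0]
    by_cases hx1 : 1 < x
    · rw [if_pos hx1, if_pos (by linarith : 1 < y)]; exact hxy
    · rw [if_neg hx1]
      by_cases hy1 : 1 < y
      · rw [if_pos hy1]
        have := (phi_mem Hf Hg hN (not_lt.mp hx0)).2
        linarith
      · rw [if_neg hy1]
        exact phi_mono Hf Hg hN (not_lt.mp hx0) hxy

lemma phiExt_denseRange (Hf : CompatibleSystem N f) (Hg : CompatibleSystem N g) (hN : 1 ≤ N)
    (hgd : Icc (0:ℝ) 1 ⊆ closure (DSet N g)) : DenseRange (PhiExt N f g) := by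
  intro z
  rcases lt_or_ge z 0 with hz | hz
  · exact subset_closure ⟨z, by unfold PhiExt; rw [if_pos hz]⟩
  rcases lt_or_ge 1 z with hz1 | hz1
  · exact subset_closure ⟨z, by unfold PhiExt; rw [if_neg (by linarith), if_pos hz1]⟩
  have hsub : DSet N g ⊆ range (PhiExt N f g) := by
    rintro d ⟨σ, hne, hσ, j, hj, rfl⟩
    refine ⟨wordComp f σ j, ?_⟩
    rw [phiExt_eq N f g (word_mem Hf hσ (endpoint_mem hj))]
    exact phi_word Hf Hg hN hne hσ hj
  exact closure_mono hsub (hgd ⟨hz, hz1⟩)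

lemma phi_continuousOn (Hf : CompatibleSystem N f) (Hg : CompatibleSystem N g) (hN : 1 ≤ N)
    (hgd : Icc (0:ℝ) 1 ⊆ closure (DSet N g)) :
    ContinuousOn (Phi N f g) (Icc (0:ℝ) 1) := by
  have hc : Continuous (PhiExt N f g) :=
    (phiExt_mono Hf Hg hN).continuous_of_denseRange (phiExt_denseRange Hf Hg hN hgd)
  exact hc.continuousOn.congr fun x hx => (phiExt_eq N f g hx).symm

/-- Two functions continuous on `t` agreeing on a subset `s` dense in `t` agree on `t`. -/
lemma eqOn_of_dense {F G : ℝ → ℝ} {s t : Set ℝ} (hF : ContinuousOn F t)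
    (hG : ContinuousOn G t) (hst : s ⊆ t) (hts : t ⊆ closure s) (he : EqOn F G s) :
    EqOn F G t := by
  intro x hx
  have hne : (𝓝[s] x).NeBot := mem_closure_iff_nhdsWithin_neBot.mp (hts hx)
  have h1 : Tendsto F (𝓝[s] x) (𝓝 (F x)) :=
    ((hF x hx).mono_left (nhdsWithin_mono x hst))
  have h2 : Tendsto G (𝓝[s] x) (𝓝 (G x)) :=
    ((hG x hx).mono_left (nhdsWithin_mono x hst))
  have h3 : Tendsto G (𝓝[s] x) (𝓝 (F x)) := by
    refine h1.congr' ?_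
    filter_upwards [self_mem_nhdsWithin] with y hy
    exact he hy
  exact tendsto_nhds_unique h3 h2

end Phi2

section Unique
variable {N : ℕ} {f g : ℕ → ℝ → ℝ}

lemma dset_subset_Icc {h : ℕ → ℝ → ℝ} (H : CompatibleSystem N h) :
    DSet N h ⊆ Icc (0:ℝ) 1 := by
  rintro d ⟨σ, -, hσ, j, hj, rfl⟩
  exact word_mem H hσ (endpoint_mem hj)

lemma no_fixed_zero (Hg : CompatibleSystem N g) (hN : 1 ≤ N)
    (hgd : Icc (0:ℝ) 1 ⊆ closure (DSet N g)) {a : ℝ} (ha : a ∈ Icc (0:ℝ) 1)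
    (hfix : g 0 a = a) : a = 0 := by
  by_contra hne
  have hapos : 0 < a := lt_of_le_of_ne ha.1 (Ne.symm hne)
  have h0N : (0:ℕ) < N := by omega
  have claim : ∀ σ : List ℕ, (∀ i ∈ σ, i < N) → ∀ j : ℝ, (j = 0 ∨ j = 1) →
      wordComp g σ j < a → wordComp g σ j = 0 := by
    intro σ
    induction σ with
    | nil =>
      intro _ j hj hlt
      rcases hj with rfl | rfl
      · rfl
      · rw [word_nil] at hlt ⊢; linarith [ha.2]
    | cons i σ ih =>
      intro hσ j hj hlt
      have hi : i < N := hσ i (by simp)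
      have hσ' : ∀ m ∈ σ, m < N := fun m hm => hσ m (by simp [hm])
      have hw := word_mem Hg hσ' (endpoint_mem hj)
      rw [word_cons] at hlt ⊢
      have hi0 : i = 0 := by
        by_contra hine
        have h1 : g 0 a ≤ g 0 1 := by
          rcases eq_or_lt_of_le ha.2 with he | hl
          · rw [he]
          · exact (cs_mono Hg h0N ha mem11 hl).le
        have h2 : g 0 1 ≤ g i 0 := cs_chain Hg (by omega) hi
        have h3 : g i 0 ≤ g i (wordComp g σ j) := by
          rcases eq_or_lt_of_le hw.1 with he | hl
          · rw [← he]
          · exact (cs_mono Hg hi mem01 hw hl).le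
        rw [hfix] at h1
        linarith
      subst hi0
      have hwa : wordComp g σ j < a := by
        by_contra hge
        push_neg at hge
        have : g 0 a ≤ g 0 (wordComp g σ j) := by
          rcases eq_or_lt_of_le hge with he | hl
          · rw [he]
          · exact (cs_mono Hg h0N ha hw hl).le
        rw [hfix] at this; linarith
      rw [ih hσ' j hj hwa]
      exact Hg.2.2.2.1
  obtain ⟨d, ⟨σ, hne', hσ, j, hj, rfl⟩, hd1, hd2⟩ :=
    dense_pick hgd le_rfl ha.2 hapos
  rw [claim σ hσ j hj hd2] at hd1
  exact lt_irrefl 0 hd1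

lemma no_fixed_one (Hg : CompatibleSystem N g) (hN : 1 ≤ N)
    (hgd : Icc (0:ℝ) 1 ⊆ closure (DSet N g)) {b : ℝ} (hb : b ∈ Icc (0:ℝ) 1)
    (hfix : g (N-1) b = b) : b = 1 := by
  by_contra hne
  have hblt : b < 1 := lt_of_le_of_ne hb.2 hne
  have hN1 : N - 1 < N := by omega
  have claim : ∀ σ : List ℕ, (∀ i ∈ σ, i < N) → ∀ j : ℝ, (j = 0 ∨ j = 1) →
      b < wordComp g σ j → wordComp g σ j = 1 := by
    intro σ
    induction σ with
    | nil =>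
      intro _ j hj hlt
      rcases hj with rfl | rfl
      · rw [word_nil] at hlt ⊢; linarith [hb.1]
      · rfl
    | cons i σ ih =>
      intro hσ j hj hlt
      have hi : i < N := hσ i (by simp)
      have hσ' : ∀ m ∈ σ, m < N := fun m hm => hσ m (by simp [hm])
      have hw := word_mem Hg hσ' (endpoint_mem hj)
      rw [word_cons] at hlt ⊢
      have hi1 : i = N - 1 := by
        by_contra hine
        have hilt : i < N - 1 := by omega
        have h1 : g i (wordComp g σ j) ≤ g i 1 := by
          rcases eq_or_lt_of_le hw.2 with he | hl
          · rw [he]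
          · exact (cs_mono Hg hi hw mem11 hl).le
        have h2 : g i 1 ≤ g (N-1) 0 := cs_chain Hg hilt hN1
        have h3 : g (N-1) 0 ≤ g (N-1) b := by
          rcases eq_or_lt_of_le hb.1 with he | hl
          · rw [← he]
          · exact (cs_mono Hg hN1 mem01 hb hl).le
        rw [hfix] at h3
        linarith
      subst hi1
      have hwb : b < wordComp g σ j := by
        by_contra hge
        push_neg at hge
        have : g (N-1) (wordComp g σ j) ≤ g (N-1) b := by
          rcases eq_or_lt_of_le hge with he | hl
          · rw [he]
          · exact (cs_mono Hg hN1 hw hb hl).le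
        rw [hfix] at this; linarith
      rw [ih hσ' j hj hwb]
      exact Hg.2.2.2.2.2
  obtain ⟨d, ⟨σ, hne', hσ, j, hj, rfl⟩, hd1, hd2⟩ :=
    dense_pick hgd hb.1 le_rfl hblt
  rw [claim σ hσ j hj hd1] at hd2
  exact lt_irrefl 1 hd2

lemma psi_word (Hf : CompatibleSystem N f) {ψ : ℝ → ℝ}
    (hm : MapsTo ψ (Icc (0:ℝ) 1) (Icc (0:ℝ) 1))
    (hcm : ∀ i < N, ∀ x ∈ Icc (0:ℝ) 1, g i (ψ x) = ψ (f i x)) :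
    ∀ σ : List ℕ, (∀ i ∈ σ, i < N) → ∀ x ∈ Icc (0:ℝ) 1,
      ψ (wordComp f σ x) = wordComp g σ (ψ x) := by
  intro σ
  induction σ with
  | nil => intro _ x _; rfl
  | cons i σ ih =>
    intro hσ x hx
    have hi : i < N := hσ i (by simp)
    have hσ' : ∀ m ∈ σ, m < N := fun m hm => hσ m (by simp [hm])
    rw [word_cons, word_cons, ← hcm i hi _ (word_mem Hf hσ' hx), ih hσ' x hx]

end Unique


theorem stmt2aux (N : ℕ) (hN : 2 ≤ N) (f g : ℕ → ℝ → ℝ)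
    (hf : CompatibleSystem N f ∧ Set.Icc (0:ℝ) 1 ⊆ closure (DSet N f))
    (hg : CompatibleSystem N g ∧ Set.Icc (0:ℝ) 1 ⊆ closure (DSet N g)) :
    ∃ φ : ℝ → ℝ,
      (Set.MapsTo φ (Set.Icc (0:ℝ) 1) (Set.Icc (0:ℝ) 1) ∧
        ContinuousOn φ (Set.Icc (0:ℝ) 1) ∧
        StrictMonoOn φ (Set.Icc (0:ℝ) 1) ∧
        ∀ i < N, ∀ x ∈ Set.Icc (0:ℝ) 1, g i (φ x) = φ (f i x)) ∧
      ∀ ψ : ℝ → ℝ,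
        (Set.MapsTo ψ (Set.Icc (0:ℝ) 1) (Set.Icc (0:ℝ) 1) ∧
          ContinuousOn ψ (Set.Icc (0:ℝ) 1) ∧
          StrictMonoOn ψ (Set.Icc (0:ℝ) 1) ∧
          ∀ i < N, ∀ x ∈ Set.Icc (0:ℝ) 1, g i (ψ x) = ψ (f i x)) →
        Set.EqOn φ ψ (Set.Icc (0:ℝ) 1) := by
  obtain ⟨Hf, hfd⟩ := hf
  obtain ⟨Hg, hgd⟩ := hg
  have hN1 : 1 ≤ N := by omega
  have hmaps : MapsTo (Phi N f g) (Icc (0:ℝ) 1) (Icc (0:ℝ) 1) :=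
    fun x hx => phi_mem Hf Hg hN1 hx.1
  have hcont : ContinuousOn (Phi N f g) (Icc (0:ℝ) 1) :=
    phi_continuousOn Hf Hg hN1 hgd
  refine ⟨Phi N f g, ⟨hmaps, hcont, phi_strictMono Hf Hg hN1 hfd, ?_⟩, ?_⟩
  · intro i hi
    have hF : ContinuousOn (fun x => g i (Phi N f g x)) (Icc (0:ℝ) 1) :=
      (Hg.2.1 i hi).comp hcont hmaps
    have hG : ContinuousOn (fun x => Phi N f g (f i x)) (Icc (0:ℝ) 1) :=
      hcont.comp (Hf.2.1 i hi) (Hf.1 i hi)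
    have he : EqOn (fun x => g i (Phi N f g x)) (fun x => Phi N f g (f i x))
        (DSet N f) := by
      rintro x ⟨σ, hne, hσ, j, hj, rfl⟩
      have hσ2 : ∀ m ∈ (i :: σ), m < N := by
        intro m hm; rcases List.mem_cons.mp hm with rfl | hm2
        · exact hi
        · exact hσ m hm2
      simp only
      rw [phi_word Hf Hg hN1 hne hσ hj]
      have : f i (wordComp f σ j) = wordComp f (i :: σ) j := rfl
      rw [this, phi_word Hf Hg hN1 (by simp) hσ2 hj, word_cons]
    exact fun x hx => eqOn_of_dense hF hG (dset_subset_Icc Hf) hfd he hx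
  · rintro ψ ⟨hψm, hψc, hψs, hψcm⟩
    have hψ0 : ψ 0 = 0 := by
      have h1 : g 0 (ψ 0) = ψ (f 0 0) := hψcm 0 (by omega) 0 mem01
      rw [Hf.2.2.2.1] at h1
      exact no_fixed_zero Hg hN1 hgd (hψm mem01) h1
    have hψ1 : ψ 1 = 1 := by
      have h1 : g (N-1) (ψ 1) = ψ (f (N-1) 1) := hψcm (N-1) (by omega) 1 mem11
      rw [Hf.2.2.2.2.2] at h1
      exact no_fixed_one Hg hN1 hgd (hψm mem11) h1
    have he : EqOn (Phi N f g) ψ (DSet N f) := by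
      rintro x ⟨σ, hne, hσ, j, hj, rfl⟩
      rw [phi_word Hf Hg hN1 hne hσ hj,
        psi_word Hf hψm hψcm σ hσ j (endpoint_mem hj)]
      rcases hj with rfl | rfl
      · rw [hψ0]
      · rw [hψ1]
    exact eqOn_of_dense hcont hψc (dset_subset_Icc Hf) hfd he

/-- if `{f i}` and `{g i}` are D-systems on `[0,1]`, there exists a
unique continuous strictly increasing `φ : [0,1] → [0,1]` with `g i ∘ φ = φ ∘ f i`. -/
theorem stmt2 (N : ℕ) (hN : 2 ≤ N) (f g : ℕ → ℝ → ℝ)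
    (hf : IsDSystem N f) (hg : IsDSystem N g) :
    ∃ φ : ℝ → ℝ,
      (Set.MapsTo φ (Set.Icc (0:ℝ) 1) (Set.Icc (0:ℝ) 1) ∧
        ContinuousOn φ (Set.Icc (0:ℝ) 1) ∧
        StrictMonoOn φ (Set.Icc (0:ℝ) 1) ∧
        ∀ i < N, ∀ x ∈ Set.Icc (0:ℝ) 1, g i (φ x) = φ (f i x)) ∧
      ∀ ψ : ℝ → ℝ,
        (Set.MapsTo ψ (Set.Icc (0:ℝ) 1) (Set.Icc (0:ℝ) 1) ∧
          ContinuousOn ψ (Set.Icc (0:ℝ) 1) ∧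
          StrictMonoOn ψ (Set.Icc (0:ℝ) 1) ∧
          ∀ i < N, ∀ x ∈ Set.Icc (0:ℝ) 1, g i (ψ x) = ψ (f i x)) →
        Set.EqOn φ ψ (Set.Icc (0:ℝ) 1) :=
  stmt2aux N hN f g hf hg
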